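/- arXiv:2011.03599 — 2 statements merged into one kernel-verified Lean document; each statement's English description precedes it below -/
import Mathlib

section
/- If H is a noncentral chi-squared random variable with k degrees of freedom and noncentrality parameter ν, then for any y > 0, P(H ≥ k + ν + 2√((k + 2ν)y) + 2y) ≤ exp(−y). -/
/-!
Chernoff's method. For a standard Gaussian `Z` and `0 ≤ t < 1/2`, completing the square gives
`𝔼 exp (t (Z + a)²) = exp (t a² / (1 - 2t)) / √(1 - 2t)`, and `log x ≤ (x - x⁻¹) / 2` bounds this by
`exp (t (1 + a²) + (1 + 2a²) t² / (1 - 2t))`. By independence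
`log 𝔼 exp (t H) ≤ t (k + ν) + (k + 2ν) t² / (1 - 2t)`, a sub-gamma bound, and Markov's inequality
for `exp (t H)` at `t = √y / (√(k + 2ν) + 2√y)` gives exactly `exp (-y)`.
-/

open MeasureTheory ProbabilityTheory Real

theorem Real.log_le_half_sub_inv {x : ℝ} (hx : 1 ≤ x) : log x ≤ (x - x⁻¹) / 2 := by
  have h := self_le_sinh_iff.2 (log_nonneg hx)
  rwa [sinh_eq, exp_neg, exp_log (by linarith)] at h

theorem inv_sqrt_one_sub_two_mul_le_exp {t : ℝ} (ht0 : 0 ≤ t) (ht : 2 * t < 1) :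
    (√(1 - 2 * t))⁻¹ ≤ exp (t + t ^ 2 / (1 - 2 * t)) := by
  have hpos : 0 < 1 - 2 * t := by linarith
  have hx : 1 ≤ (1 - 2 * t)⁻¹ := one_le_inv₀ hpos |>.2 (by nlinarith)
  have hlog := log_le_half_sub_inv hx
  rw [← sqrt_inv, sqrt_eq_rpow, rpow_def_of_pos (inv_pos.2 hpos), exp_le_exp]
  have : (1 - 2 * t)⁻¹ - (1 - 2 * t)⁻¹⁻¹ = 4 * (t + t ^ 2 / (1 - 2 * t)) := by
    field_simp
    ring
  linarith

theorem mgf_sq_add_gaussianReal (a : ℝ) {t : ℝ} (ht : 2 * t < 1) :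
    mgf (fun x => (x + a) ^ 2) (gaussianReal 0 1) t =
      exp (t * a ^ 2 / (1 - 2 * t)) / √(1 - 2 * t) := by
  have hpos : 0 < 1 - 2 * t := by linarith
  -- completing the square in the Gaussian density
  have hsq : ∀ x, gaussianPDFReal 0 1 x • exp (t * (x + a) ^ 2) =
      ((√(2 * π))⁻¹ * exp (t * a ^ 2 / (1 - 2 * t))) *
        exp (-((1 - 2 * t) / 2) * (x - 2 * t * a / (1 - 2 * t)) ^ 2) := by
    intro x
    simp only [gaussianPDFReal, NNReal.coe_one, smul_eq_mul, mul_assoc, ← exp_add]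
    congr 2
    · norm_num
    · field_simp
      ring
  rw [mgf, integral_gaussianReal_eq_integral_smul one_ne_zero]
  simp_rw [hsq]
  rw [integral_const_mul, integral_sub_right_eq_self (fun x => exp (-((1 - 2 * t) / 2) * x ^ 2)),
    integral_gaussian, div_div_eq_mul_div, sqrt_div' _ hpos.le, mul_comm π, sqrt_mul zero_le_two]
  field_simp

theorem exp_div_sqrt_one_sub_two_mul_le (a : ℝ) {t : ℝ} (ht0 : 0 ≤ t) (ht : 2 * t < 1) :
    exp (t * a ^ 2 / (1 - 2 * t)) / √(1 - 2 * t) ≤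
      exp (t * (1 + a ^ 2) + (1 + 2 * a ^ 2) * t ^ 2 / (1 - 2 * t)) := by
  have hne : 1 - 2 * t ≠ 0 := by linarith
  have hsplit : t * (1 + a ^ 2) + (1 + 2 * a ^ 2) * t ^ 2 / (1 - 2 * t) =
      t * a ^ 2 / (1 - 2 * t) + (t + t ^ 2 / (1 - 2 * t)) := by
    simp only [div_eq_mul_inv]
    linear_combination (-t * a ^ 2) * mul_inv_cancel₀ hne
  rw [div_eq_mul_inv, hsplit, exp_add]
  gcongr
  exact inv_sqrt_one_sub_two_mul_le_exp ht0 ht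

theorem measureReal_ge_le_exp_neg_of_mgf_le {Ω : Type*} [MeasurableSpace Ω] {μ : Measure Ω}
    [IsFiniteMeasure μ] {X : Ω → ℝ} {m A c y : ℝ} (hA : 0 < A) (hc : 0 ≤ c) (hy : 0 ≤ y)
    (hint : ∀ t, 0 ≤ t → c * t < 1 → Integrable (fun ω => exp (t * X ω)) μ)
    (hmgf : ∀ t, 0 ≤ t → c * t < 1 → mgf X μ t ≤ exp (t * m + A * t ^ 2 / (1 - c * t))) :
    μ.real {ω | m + 2 * √(A * y) + c * y ≤ X ω} ≤ exp (-y) := by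
  obtain ⟨α, hα, rfl⟩ : ∃ α, 0 < α ∧ A = α ^ 2 := ⟨√A, sqrt_pos.2 hA, (sq_sqrt hA.le).symm⟩
  obtain ⟨s, hs, rfl⟩ : ∃ s, 0 ≤ s ∧ y = s ^ 2 := ⟨√y, sqrt_nonneg y, (sq_sqrt hy).symm⟩
  rw [← mul_pow, sqrt_sq (by positivity)]
  have hden : 0 < α + c * s := by positivity
  -- the minimiser of the Chernoff exponent
  set t := s / (α + c * s) with ht
  have ht0 : 0 ≤ t := by positivity
  have h1ct : 1 - c * t = α / (α + c * s) := by
    rw [ht]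
    field_simp
    ring
  have hct : c * t < 1 := by
    have : 0 < 1 - c * t := h1ct ▸ by positivity
    linarith
  have hexponent : -t * (m + 2 * (α * s) + c * s ^ 2) + (t * m + α ^ 2 * t ^ 2 / (1 - c * t)) =
      -s ^ 2 := by
    rw [h1ct, ht]
    field_simp
    ring
  calc μ.real {ω | m + 2 * (α * s) + c * s ^ 2 ≤ X ω}
      ≤ exp (-t * (m + 2 * (α * s) + c * s ^ 2)) * mgf X μ t :=
        measure_ge_le_exp_mul_mgf _ ht0 (hint t ht0 hct)
    _ ≤ exp (-t * (m + 2 * (α * s) + c * s ^ 2)) * exp (t * m + α ^ 2 * t ^ 2 / (1 - c * t)) := by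
        gcongr
        exact hmgf t ht0 hct
    _ = exp (-s ^ 2) := by rw [← exp_add, hexponent]

section

variable {Ω : Type*} [MeasurableSpace Ω] {μ : Measure Ω} {t : ℝ}

theorem mgf_sq_add_of_map_eq_gaussianReal {Z : Ω → ℝ} (hZ : μ.map Z = gaussianReal 0 1)
    (a : ℝ) (ht : 2 * t < 1) :
    mgf (fun ω => (Z ω + a) ^ 2) μ t = exp (t * a ^ 2 / (1 - 2 * t)) / √(1 - 2 * t) := by
  have hZm : AEMeasurable Z μ := aemeasurable_of_map_neZero (by rw [hZ]; infer_instance)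
  rw [← mgf_sq_add_gaussianReal a ht, ← hZ, mgf_map hZm (by fun_prop)]
  rfl

theorem mgf_sum_sq_add {ι : Type*} [Fintype ι] {Z : ι → Ω → ℝ} (hindep : iIndepFun Z μ)
    (hlaw : ∀ i, μ.map (Z i) = gaussianReal 0 1) (a : ι → ℝ) (ht : 2 * t < 1) :
    mgf (fun ω => ∑ i, (Z i ω + a i) ^ 2) μ t =
      ∏ i, exp (t * a i ^ 2 / (1 - 2 * t)) / √(1 - 2 * t) := by
  have hZm i : AEMeasurable (Z i) μ := aemeasurable_of_map_neZero (by rw [hlaw i]; infer_instance)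
  have hindep' : iIndepFun (fun i ω => (Z i ω + a i) ^ 2) μ :=
    hindep.comp₀ (fun i x => (x + a i) ^ 2) hZm fun i => by fun_prop
  rw [← Finset.sum_fn, hindep'.mgf_sum₀ (fun i => by fun_prop)]
  exact Finset.prod_congr rfl fun i _ => mgf_sq_add_of_map_eq_gaussianReal (hlaw i) (a i) ht

theorem mgf_sum_sq_add_le {ι : Type*} [Fintype ι] {Z : ι → Ω → ℝ} (hindep : iIndepFun Z μ)
    (hlaw : ∀ i, μ.map (Z i) = gaussianReal 0 1) (a : ι → ℝ) (ht0 : 0 ≤ t) (ht : 2 * t < 1) :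
    mgf (fun ω => ∑ i, (Z i ω + a i) ^ 2) μ t ≤
      exp (t * (Fintype.card ι + ∑ i, a i ^ 2) +
        (Fintype.card ι + 2 * ∑ i, a i ^ 2) * t ^ 2 / (1 - 2 * t)) := by
  rw [mgf_sum_sq_add hindep hlaw a ht]
  calc ∏ i, exp (t * a i ^ 2 / (1 - 2 * t)) / √(1 - 2 * t)
      ≤ ∏ i, exp (t * (1 + a i ^ 2) + (1 + 2 * a i ^ 2) * t ^ 2 / (1 - 2 * t)) :=
        Finset.prod_le_prod (fun i _ => by positivity)
          fun i _ => exp_div_sqrt_one_sub_two_mul_le (a i) ht0 ht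
    _ = _ := by
        rw [← exp_sum, Finset.sum_add_distrib, ← Finset.mul_sum, ← Finset.sum_div, ← Finset.sum_mul,
          Finset.sum_add_distrib, Finset.sum_add_distrib, ← Finset.mul_sum]
        simp

end

/-- Upper-tail concentration bound for a noncentral chi-squared random variable with
`k` degrees of freedom and noncentrality `ν`, realised as `H = Σ (Z i + a i)^2` with
`Z i` i.i.d. standard Gaussians and `Σ (a i)^2 = ν`. -/
theorem noncentral_chisq_upper_tail
    {Ω : Type*} [MeasureSpace Ω] [IsProbabilityMeasure (ℙ : Measure Ω)]
    (k : ℕ) (Z : Fin k → Ω → ℝ)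
    (hindep : iIndepFun Z ℙ)
    (hlaw : ∀ i, Measure.map (Z i) ℙ = gaussianReal 0 1)
    (a : Fin k → ℝ) (ν : ℝ) (hν : ∑ i, (a i) ^ 2 = ν)
    (H : Ω → ℝ) (hH : ∀ ω, H ω = ∑ i, (Z i ω + a i) ^ 2)
    (y : ℝ) (hy : 0 < y) :
    ℙ {ω | (k : ℝ) + ν + 2 * Real.sqrt ((k + 2 * ν) * y) + 2 * y ≤ H ω} ≤
      ENNReal.ofReal (Real.exp (-y)) := by
  obtain rfl | hk := Nat.eq_zero_or_pos k
  · have hH0 ω : H ω = 0 := by simp [hH]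
    have hν0 : ν = 0 := by simp [← hν]
    simp [hH0, hν0, not_le.2 (mul_pos two_pos hy)]
  have hν0 : 0 ≤ ν := hν ▸ Finset.sum_nonneg fun i _ => sq_nonneg (a i)
  have hmgf t (ht0 : 0 ≤ t) (ht : 2 * t < 1) :
      mgf H ℙ t ≤ exp (t * (k + ν) + (k + 2 * ν) * t ^ 2 / (1 - 2 * t)) := by
    simpa [funext hH, hν] using mgf_sum_sq_add_le hindep hlaw a ht0 ht
  have hint t (ht : 2 * t < 1) : Integrable (fun ω => exp (t * H ω)) ℙ := by
    rw [← mgf_pos_iff, funext hH, mgf_sum_sq_add hindep hlaw a ht]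
    positivity
  have htail := measureReal_ge_le_exp_neg_of_mgf_le (μ := ℙ) (by positivity) zero_le_two hy.le
    (fun t _ ht => hint t ht) hmgf
  exact (ENNReal.le_ofReal_iff_toReal_le (measure_ne_top _ _) (exp_nonneg _)).2 htail
end

section
/- Let H ~ χ²_d(ν) be a noncentral chi-squared random variable with d degrees of freedom and noncentrality ν, let β, y > 0 and K = d + √(2βd) + β. If ν ≥ 4y + β + √(2βd) + 2√(y(4y + (√(2β) + √d)²)), then P(H > K) ≥ 1 − exp(−y). -/
/-!
Chernoff's bound for the lower tail. If `Z ~ N(0, 1)` and `λ ≥ 0`, completing the square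
gives `E exp(-λ (Z + c)²) = exp(-λ c² / (1 + 2λ)) / √(1 + 2λ)`, which is at most
`exp(λ² (1 + 2c²) - λ (1 + c²))`; by independence
`E exp(-λ H) ≤ exp(λ² (d + 2ν) - λ (d + ν))`. Choosing `λ = √(y / (d + 2ν))` gives
Birgé's bound `P(H ≤ d + ν - 2√((d + 2ν) y)) ≤ exp(-y)`, and the assumption on `ν` is
exactly what makes `K ≤ d + ν - 2√((d + 2ν) y)`.
-/

open MeasureTheory ProbabilityTheory Real

lemma two_mul_sub_sq_le_log_one_add_two_mul {l : ℝ} (hl : 0 ≤ l) :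
    2 * (l - l ^ 2) ≤ log (1 + 2 * l) := by
  calc 2 * (l - l ^ 2) ≤ 2 * (2 * l) / (2 * l + 2) := by
        rw [le_div_iff₀ (by positivity)]; nlinarith [pow_nonneg hl 3]
    _ ≤ log (1 + 2 * l) := le_log_one_add_of_nonneg (by positivity)

lemma integral_exp_neg_mul_add_sq_gaussianReal {l : ℝ} (hl : 0 < 1 + 2 * l) (c : ℝ) :
    ∫ x, exp (-(l * (x + c) ^ 2)) ∂gaussianReal 0 1
      = exp (-(l * c ^ 2) / (1 + 2 * l)) / √(1 + 2 * l) := by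
  have hb : 0 < 1 / 2 + l := by linarith
  have hsquare : ∀ x, gaussianPDFReal 0 1 x • exp (-(l * (x + c) ^ 2))
      = ((√(2 * π))⁻¹ * exp (-(l * c ^ 2) / (1 + 2 * l)))
          * exp (-(1 / 2 + l) * (x + l * c / (1 / 2 + l)) ^ 2) := by
    intro x
    simp only [gaussianPDFReal, NNReal.coe_one, mul_one, sub_zero, smul_eq_mul]
    rw [mul_assoc, mul_assoc, ← exp_add, ← exp_add]
    congr 2
    field_simp
    ring
  simp_rw [integral_gaussianReal_eq_integral_smul one_ne_zero, hsquare, integral_const_mul,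
    integral_add_right_eq_self (fun x => exp (-(1 / 2 + l) * x ^ 2)), integral_gaussian]
  rw [show π / (1 / 2 + l) = 2 * π / (1 + 2 * l) by field_simp, sqrt_div' _ hl.le]
  have : 0 < √(2 * π) := by positivity
  field_simp

lemma integral_exp_neg_mul_add_sq_gaussianReal_le {l : ℝ} (hl : 0 ≤ l) (c : ℝ) :
    ∫ x, exp (-(l * (x + c) ^ 2)) ∂gaussianReal 0 1
      ≤ exp (l ^ 2 * (1 + 2 * c ^ 2) - l * (1 + c ^ 2)) := by
  have h12 : 0 < 1 + 2 * l := by linarith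
  have hsqrt : exp (l - l ^ 2) ≤ √(1 + 2 * l) := by
    rw [le_sqrt (by positivity) h12.le, ← exp_nat_mul, ← le_log_iff_exp_le h12]
    exact_mod_cast two_mul_sub_sq_le_log_one_add_two_mul hl
  rw [integral_exp_neg_mul_add_sq_gaussianReal h12]
  calc exp (-(l * c ^ 2) / (1 + 2 * l)) / √(1 + 2 * l)
      ≤ exp (-(l * c ^ 2) / (1 + 2 * l)) / exp (l - l ^ 2) := by gcongr
    _ = exp (-(l * c ^ 2) / (1 + 2 * l) - (l - l ^ 2)) := (exp_sub _ _).symm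
    _ ≤ exp (l ^ 2 * (1 + 2 * c ^ 2) - l * (1 + c ^ 2)) := by
        rw [exp_le_exp, div_sub' h12.ne', div_le_iff₀ h12]
        nlinarith [mul_nonneg (pow_nonneg hl 3) (sq_nonneg c)]

lemma mgf_neg_sum_sq_add_le {Ω ι : Type*} [MeasurableSpace Ω] [Fintype ι] {μ : Measure Ω}
    {Z : ι → Ω → ℝ} (hindep : iIndepFun Z μ)
    (hlaw : ∀ i, μ.map (Z i) = gaussianReal 0 1) (a : ι → ℝ) {l : ℝ} (hl : 0 ≤ l) :
    mgf (fun ω => ∑ i, (Z i ω + a i) ^ 2) μ (-l)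
      ≤ exp (l ^ 2 * (Fintype.card ι + 2 * ∑ i, a i ^ 2)
          - l * (Fintype.card ι + ∑ i, a i ^ 2)) := by
  have hZ : ∀ i, AEMeasurable (Z i) μ := fun i =>
    aemeasurable_of_map_neZero (by rw [hlaw i]; infer_instance)
  have hcoord : ∀ i, mgf (fun ω => (Z i ω + a i) ^ 2) μ (-l)
      ≤ exp (l ^ 2 * (1 + 2 * a i ^ 2) - l * (1 + a i ^ 2)) := by
    intro i
    calc mgf (fun ω => (Z i ω + a i) ^ 2) μ (-l)
        = ∫ x, exp (-(l * (x + a i) ^ 2)) ∂gaussianReal 0 1 := by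
          rw [← hlaw i, integral_map (hZ i) (by fun_prop)]
          simp only [mgf, neg_mul]
      _ ≤ _ := integral_exp_neg_mul_add_sq_gaussianReal_le hl (a i)
  have hsum : mgf (fun ω => ∑ i, (Z i ω + a i) ^ 2) μ (-l)
      = ∏ i, mgf (fun ω => (Z i ω + a i) ^ 2) μ (-l) := by
    simpa only [Finset.sum_fn, Function.comp_def] using
      (hindep.comp (fun i x => (x + a i) ^ 2) fun i => by fun_prop).mgf_sum₀
        (fun i => by fun_prop) Finset.univ (t := -l)
  rw [hsum]
  calc ∏ i, mgf (fun ω => (Z i ω + a i) ^ 2) μ (-l)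
      ≤ ∏ i, exp (l ^ 2 * (1 + 2 * a i ^ 2) - l * (1 + a i ^ 2)) :=
        Finset.prod_le_prod (fun i _ => mgf_nonneg) (fun i _ => hcoord i)
    _ = _ := by
        rw [← exp_sum]
        congr 1
        simp only [Finset.sum_sub_distrib, ← Finset.mul_sum, Finset.sum_add_distrib,
          Finset.sum_const, Finset.card_univ, nsmul_eq_mul, mul_one]

lemma measureReal_le_sub_two_sqrt_le_exp_neg {Ω : Type*} [MeasurableSpace Ω] {μ : Measure Ω}
    [IsFiniteMeasure μ] {X : Ω → ℝ} {m D y : ℝ} (hD : 0 < D) (hy : 0 ≤ y)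
    (hint : ∀ l, 0 ≤ l → Integrable (fun ω => exp (-l * X ω)) μ)
    (hmgf : ∀ l, 0 ≤ l → mgf X μ (-l) ≤ exp (l ^ 2 * D - l * m)) :
    μ.real {ω | X ω ≤ m - 2 * √(D * y)} ≤ exp (-y) := by
  set l := √(y / D)
  have hl : 0 ≤ l := sqrt_nonneg _
  have hl_mul : l * √(D * y) = y := by
    rw [← sqrt_mul (div_nonneg hy hD.le), show y / D * (D * y) = y ^ 2 by field_simp,
      sqrt_sq hy]
  have hl_sq : l ^ 2 * D = y := by rw [sq_sqrt (div_nonneg hy hD.le)]; field_simp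
  calc μ.real {ω | X ω ≤ m - 2 * √(D * y)}
      ≤ exp (-(-l) * (m - 2 * √(D * y))) * mgf X μ (-l) :=
        measure_le_le_exp_mul_mgf _ (neg_nonpos.mpr hl) (hint l hl)
    _ ≤ exp (-(-l) * (m - 2 * √(D * y))) * exp (l ^ 2 * D - l * m) := by
        gcongr; exact hmgf l hl
    _ = exp (-y) := by
        rw [← exp_add]
        congr 1
        linear_combination (-2) * hl_mul + hl_sq

lemma integrable_exp_neg_mul_of_nonneg {Ω : Type*} [MeasurableSpace Ω] {μ : Measure Ω}
    [IsFiniteMeasure μ] {X : Ω → ℝ} (hX : AEMeasurable X μ) (hX0 : ∀ ω, 0 ≤ X ω)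
    {l : ℝ} (hl : 0 ≤ l) : Integrable (fun ω => exp (-l * X ω)) μ :=
  .of_bound (by fun_prop) 1 <| ae_of_all _ fun ω => by
    rw [norm_of_nonneg (exp_pos _).le, exp_le_one_iff]
    nlinarith [hX0 ω]

theorem measureReal_sum_sq_add_le_le_exp_neg {Ω ι : Type*} [MeasurableSpace Ω] [Fintype ι]
    {μ : Measure Ω} {Z : ι → Ω → ℝ} (hindep : iIndepFun Z μ)
    (hlaw : ∀ i, μ.map (Z i) = gaussianReal 0 1) (a : ι → ℝ) {y : ℝ} (hy : 0 ≤ y)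
    (hD : 0 < Fintype.card ι + 2 * ∑ i, a i ^ 2) :
    μ.real {ω | ∑ i, (Z i ω + a i) ^ 2 ≤ Fintype.card ι + ∑ i, a i ^ 2
      - 2 * √((Fintype.card ι + 2 * ∑ i, a i ^ 2) * y)} ≤ exp (-y) := by
  have := hindep.isProbabilityMeasure
  have hZ : ∀ i, AEMeasurable (Z i) μ := fun i =>
    aemeasurable_of_map_neZero (by rw [hlaw i]; infer_instance)
  refine measureReal_le_sub_two_sqrt_le_exp_neg hD hy (fun l hl => ?_) fun l hl => ?_
  · exact integrable_exp_neg_mul_of_nonneg (by fun_prop)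
      (fun ω => Finset.sum_nonneg fun i _ => sq_nonneg _) hl
  · exact mgf_neg_sum_sq_add_le hindep hlaw a hl

lemma dense_threshold_le_sub_two_sqrt {d β y ν : ℝ} (hd : 0 ≤ d) (hβ : 0 ≤ β)
    (hy : 0 ≤ y)
    (hν : ν ≥ 4 * y + β + √(2 * β * d) + 2 * √(y * (4 * y + (√(2 * β) + √d) ^ 2))) :
    d + √(2 * β * d) + β ≤ d + ν - 2 * √((d + 2 * ν) * y) := by
  set s := β + √(2 * β * d)
  set q := √(y * (4 * y + (√(2 * β) + √d) ^ 2))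
  have hq : 0 ≤ q := sqrt_nonneg _
  have hq_sq : q ^ 2 = y * (4 * y + d + 2 * s) := by
    rw [sq_sqrt (by positivity), add_sq, sq_sqrt (by positivity), sq_sqrt hd, mul_assoc 2,
      ← sqrt_mul (by positivity)]
    ring
  have hroot : √((d + 2 * ν) * y) ≤ (ν - s) / 2 := by
    rw [sqrt_le_left (by linarith)]
    -- `(ν - s)² - 4 (d + 2ν) y = (ν - s - 4y)² - 4q²`
    have hgap : 0 ≤ ν - s - 4 * y - 2 * q := by linarith
    nlinarith [mul_nonneg hgap (by linarith : 0 ≤ ν - s - 4 * y + 2 * q)]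
  linarith

/-- Dense-change power bound: if `H ~ χ²_d(ν)` with
`ν ≥ 4y + β + √(2βd) + 2√(y (4y + (√(2β) + √d)²))` and `K = d + √(2βd) + β`,
then `P(H > K) ≥ 1 - exp(-y)`. -/
theorem noncentral_chisq_dense_power
    {Ω : Type*} [MeasureSpace Ω] [IsProbabilityMeasure (ℙ : Measure Ω)]
    (d : ℕ) (Z : Fin d → Ω → ℝ)
    (hindep : iIndepFun Z ℙ)
    (hlaw : ∀ i, Measure.map (Z i) ℙ = gaussianReal 0 1)
    (a : Fin d → ℝ) (ν : ℝ) (hνdef : ∑ i, (a i) ^ 2 = ν)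
    (H : Ω → ℝ) (hH : ∀ ω, H ω = ∑ i, (Z i ω + a i) ^ 2)
    (β y K : ℝ) (hβ : 0 < β) (hy : 0 < y)
    (hK : K = d + Real.sqrt (2 * β * d) + β)
    (hν : ν ≥ 4 * y + β + Real.sqrt (2 * β * d) +
      2 * Real.sqrt (y * (4 * y + (Real.sqrt (2 * β) + Real.sqrt d) ^ 2))) :
    ENNReal.ofReal (1 - Real.exp (-y)) ≤ ℙ {ω | K < H ω} := by
  have hD : 0 < (d : ℝ) + 2 * ν := by
    have : 0 < ν := by
      linarith [sqrt_nonneg (2 * β * d), sqrt_nonneg (y * (4 * y + (√(2 * β) + √d) ^ 2))]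
    positivity
  have htail := measureReal_sum_sq_add_le_le_exp_neg hindep hlaw a hy.le
    (by rwa [Fintype.card_fin, hνdef])
  rw [Fintype.card_fin, hνdef] at htail
  have hthreshold := hK ▸ dense_threshold_le_sub_two_sqrt d.cast_nonneg hβ.le hy.le hν
  have hlow : ℙ {ω | H ω ≤ K} ≤ ENNReal.ofReal (exp (-y)) := by
    refine (measure_mono fun ω (hω : H ω ≤ K) => ?_).trans
      ((ENNReal.le_ofReal_iff_toReal_le (measure_ne_top _ _) (exp_pos _).le).mpr htail)
    exact (hH ω).symm.le.trans (hω.trans hthreshold)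
  calc ENNReal.ofReal (1 - exp (-y)) = 1 - ENNReal.ofReal (exp (-y)) := by
        rw [ENNReal.ofReal_sub _ (exp_pos _).le, ENNReal.ofReal_one]
    _ ≤ 1 - ℙ {ω | H ω ≤ K} := tsub_le_tsub_left hlow 1
    _ ≤ ℙ {ω | K < H ω} := by
        rw [tsub_le_iff_right]
        calc 1 = ℙ ({ω | K < H ω} ∪ {ω | H ω ≤ K}) := by
              rw [← measure_univ (μ := (ℙ : Measure Ω))]; congr; ext ω; simp [lt_or_ge]
          _ ≤ _ := measure_union_le _ _
end
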